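/- arXiv:2209.14552 — 2 statements merged into one kernel-verified Lean document; each statement's English description precedes it below -/
import Mathlib

section
/- Suppose each subsystem Σᵢ, i = 1,…,N, is Xᵢ-dissipative with storage function Vᵢ, i.e., V̇ᵢ ≤ [uᵢ; yᵢ]ᵀ Xᵢ [uᵢ; yᵢ] with Xᵢ = [[Xᵢ¹¹, Xᵢ¹²],[Xᵢ²¹, Xᵢ²²]] symmetric, and the interconnection is u = M_{uy} y. If there exist scalars pᵢ > 0 such that [M_{uy}; I]ᵀ 𝐗_p [M_{uy}; I] ≤ 0, where 𝐗_p = [[diag(pᵢXᵢ¹¹), diag(pᵢXᵢ¹²)],[diag(pᵢXᵢ²¹), diag(pᵢXᵢ²²)]], then V(x) = Σᵢ pᵢVᵢ(xᵢ) satisfies V̇ ≤ 0 along trajectories of the interconnected system. -/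
open Matrix

lemma dot_bd {N q r : ℕ} (A : Fin N → Matrix (Fin q) (Fin r) ℝ)
    (u : Fin q × Fin N → ℝ) (v : Fin r × Fin N → ℝ) :
    u ⬝ᵥ (Matrix.blockDiagonal A).mulVec v
      = ∑ i, (fun a => u (a, i)) ⬝ᵥ (A i).mulVec (fun b => v (b, i)) := by
  simp only [dotProduct, mulVec, blockDiagonal_apply, Fintype.sum_prod_type,
    ite_mul, zero_mul, mul_ite, mul_zero, Finset.mul_sum, Finset.sum_ite_eq,
    Finset.sum_ite_eq', Finset.mem_univ, if_true]
  exact Finset.sum_comm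


/-- NSC 1 stability (Proposition 1, algebraic form): if each subsystem is
Xᵢ-dissipative (V̇ᵢ ≤ [uᵢ;yᵢ]ᵀXᵢ[uᵢ;yᵢ]), u = M_{uy} y, and there are pᵢ > 0
with [M_{uy}; I]ᵀ 𝐗_p [M_{uy}; I] ≤ 0 (negative semidefinite), then
V̇ = Σᵢ pᵢ V̇ᵢ ≤ 0. -/
theorem nsc1_lyapunov_decrease {N q m : ℕ}
    (X11 : Fin N → Matrix (Fin q) (Fin q) ℝ)
    (X12 : Fin N → Matrix (Fin q) (Fin m) ℝ)
    (X21 : Fin N → Matrix (Fin m) (Fin q) ℝ)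
    (X22 : Fin N → Matrix (Fin m) (Fin m) ℝ)
    (p : Fin N → ℝ) (hp : ∀ i, 0 < p i)
    (Muy : Matrix (Fin q × Fin N) (Fin m × Fin N) ℝ)
    (u : Fin q × Fin N → ℝ) (y : Fin m × Fin N → ℝ)
    (Vdot : Fin N → ℝ)
    -- subsystem dissipation inequalities
    (hdiss : ∀ i : Fin N,
      Vdot i ≤
        (Sum.elim (fun a => u (a, i)) (fun b => y (b, i))) ⬝ᵥ
          ((Matrix.fromBlocks (X11 i) (X12 i) (X21 i) (X22 i)).mulVec
            (Sum.elim (fun a => u (a, i)) (fun b => y (b, i)))))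
    -- interconnection u = M_{uy} y
    (hint : u = Muy.mulVec y)
    -- LMI: [M;I]ᵀ 𝐗_p [M;I] ≤ 0 (negative semidefinite)
    (hLMI : ∀ z : Fin m × Fin N → ℝ,
      z ⬝ᵥ
        (((Matrix.of fun (r : (Fin q × Fin N) ⊕ (Fin m × Fin N))
              (c : Fin m × Fin N) =>
            Sum.elim (fun a => Muy a c) (fun b => if b = c then (1:ℝ) else 0) r)ᵀ *
          (Matrix.fromBlocks
            (Matrix.blockDiagonal fun i => p i • X11 i)
            (Matrix.blockDiagonal fun i => p i • X12 i)
            (Matrix.blockDiagonal fun i => p i • X21 i)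
            (Matrix.blockDiagonal fun i => p i • X22 i)) *
          (Matrix.of fun (r : (Fin q × Fin N) ⊕ (Fin m × Fin N))
              (c : Fin m × Fin N) =>
            Sum.elim (fun a => Muy a c) (fun b => if b = c then (1:ℝ) else 0) r)).mulVec z)
        ≤ 0) :
    (∑ i, p i * Vdot i) ≤ 0 := by
  set E : Matrix ((Fin q × Fin N) ⊕ (Fin m × Fin N)) (Fin m × Fin N) ℝ :=
    Matrix.of fun r c =>
      Sum.elim (fun a => Muy a c) (fun b => if b = c then (1:ℝ) else 0) r with hE
  set Xp : Matrix ((Fin q × Fin N) ⊕ (Fin m × Fin N)) ((Fin q × Fin N) ⊕ (Fin m × Fin N)) ℝ :=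
    Matrix.fromBlocks
      (Matrix.blockDiagonal fun i => p i • X11 i)
      (Matrix.blockDiagonal fun i => p i • X12 i)
      (Matrix.blockDiagonal fun i => p i • X21 i)
      (Matrix.blockDiagonal fun i => p i • X22 i) with hXp
  have hEy : E.mulVec y = Sum.elim u y := by
    funext r
    cases r with
    | inl a =>
      simp [hE, mulVec, dotProduct, hint]
    | inr b =>
      simp [hE, mulVec, dotProduct]
  have key : (∑ i, p i *
      ((Sum.elim (fun a => u (a, i)) (fun b => y (b, i))) ⬝ᵥ
        ((Matrix.fromBlocks (X11 i) (X12 i) (X21 i) (X22 i)).mulVec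
          (Sum.elim (fun a => u (a, i)) (fun b => y (b, i))))))
      = y ⬝ᵥ ((Eᵀ * Xp * E).mulVec y) := by
    rw [← Matrix.mulVec_mulVec, ← Matrix.mulVec_mulVec,
      Matrix.dotProduct_mulVec, Matrix.vecMul_transpose, hEy]
    rw [hXp, Matrix.fromBlocks_mulVec, sumElim_dotProduct_sumElim]
    simp only [dotProduct_add, dot_bd, Matrix.smul_mulVec,
      dotProduct_smul, Sum.elim_comp_inl, Sum.elim_comp_inr, smul_eq_mul, Matrix.fromBlocks_mulVec,
      sumElim_dotProduct_sumElim, mul_add, ← Finset.sum_add_distrib]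
  calc (∑ i, p i * Vdot i) ≤ _ := Finset.sum_le_sum fun i _ =>
        mul_le_mul_of_nonneg_left (hdiss i) (hp i).le
    _ = _ := key
    _ ≤ 0 := hLMI y
end

section
/- Suppose subsystems Σᵢ (i∈ℕ_N) are Xᵢ-dissipative with storage functions Vᵢ and subsystems Σ̄ᵢ (i∈ℕ_N̄) are X̄ᵢ-dissipative with storage functions V̄ᵢ, interconnected by [u; ū] = [[M_{uy}, M_{uȳ}],[M_{ūy}, M_{ūȳ}]][y; ȳ]. If there exist pᵢ > 0, p̄ᵢ > 0 such that [[M_{uy}, M_{uȳ}],[I, 0],[M_{ūy}, M_{ūȳ}],[0, I]]ᵀ · blkdiag(𝐗_p, 𝐗̄_{p̄}) · [[M_{uy}, M_{uȳ}],[I, 0],[M_{ūy}, M_{ūȳ}],[0, I]] ≤ 0, then V = Σᵢ pᵢVᵢ + Σᵢ p̄ᵢV̄ᵢ satisfies V̇ ≤ 0, i.e., the interconnected system NSC 3 is Lyapunov stable at the equilibrium. -/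
open Matrix

lemma sw {α β : Type*} [Fintype α] [Fintype β] (f : α → β → ℝ) (g : β → α → ℝ)
    (h : ∀ a b, f a b = g b a) : ∑ a, ∑ b, f a b = ∑ b, ∑ a, g b a := by
  rw [Finset.sum_comm]
  exact Finset.sum_congr rfl fun b _ => Finset.sum_congr rfl fun a _ => h a b

lemma blockdiag_quad {N q m : ℕ}
    (X11 : Fin N → Matrix (Fin q) (Fin q) ℝ)
    (X12 : Fin N → Matrix (Fin q) (Fin m) ℝ)
    (X21 : Fin N → Matrix (Fin m) (Fin q) ℝ)
    (X22 : Fin N → Matrix (Fin m) (Fin m) ℝ)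
    (p : Fin N → ℝ) (u : Fin q × Fin N → ℝ) (y : Fin m × Fin N → ℝ) :
    (Sum.elim u y) ⬝ᵥ ((Matrix.fromBlocks
        (Matrix.blockDiagonal fun i => p i • X11 i)
        (Matrix.blockDiagonal fun i => p i • X12 i)
        (Matrix.blockDiagonal fun i => p i • X21 i)
        (Matrix.blockDiagonal fun i => p i • X22 i)).mulVec (Sum.elim u y))
    = ∑ i, p i * ((Sum.elim (fun a => u (a,i)) (fun b => y (b,i))) ⬝ᵥ
        ((Matrix.fromBlocks (X11 i) (X12 i) (X21 i) (X22 i)).mulVec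
          (Sum.elim (fun a => u (a,i)) (fun b => y (b,i))))) := by
  simp only [dotProduct, mulVec, fromBlocks_apply₁₁, fromBlocks_apply₁₂,
    fromBlocks_apply₂₁, fromBlocks_apply₂₂, Fintype.sum_sum_type, Sum.elim_inl,
    Sum.elim_inr, blockDiagonal_apply, Fintype.sum_prod_type, Matrix.smul_apply,
    smul_eq_mul, Finset.mul_sum, mul_add, Finset.sum_add_distrib, mul_ite, mul_zero,
    ite_mul, zero_mul, Finset.sum_ite_eq, Finset.sum_ite_eq', Finset.mem_univ, if_true]
  refine congrArg₂ (·+·) (congrArg₂ (·+·) ?_ ?_) (congrArg₂ (·+·) ?_ ?_) <;>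
    exact sw _ _ fun a b => Finset.sum_congr rfl fun c _ => by ring


/-- NSC 3 stability (Proposition 3, algebraic form): with two families of
dissipative subsystems interconnected by
[u;ū] = [[M_{uy},M_{uȳ}],[M_{ūy},M_{ūȳ}]][y;ȳ], if there exist pᵢ > 0, p̄ᵢ > 0
such that [[M_{uy},M_{uȳ}],[I,0],[M_{ūy},M_{ūȳ}],[0,I]]ᵀ·blkdiag(𝐗_p,𝐗̄_{p̄})·(·) ≤ 0
(negative semidefinite), then V̇ = Σᵢ pᵢV̇ᵢ + Σᵢ p̄ᵢ V̄̇ᵢ ≤ 0. -/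
theorem nsc3_lyapunov_decrease {N Nb q m qb mb : ℕ}
    (X11 : Fin N → Matrix (Fin q) (Fin q) ℝ)
    (X12 : Fin N → Matrix (Fin q) (Fin m) ℝ)
    (X21 : Fin N → Matrix (Fin m) (Fin q) ℝ)
    (X22 : Fin N → Matrix (Fin m) (Fin m) ℝ)
    (Xb11 : Fin Nb → Matrix (Fin qb) (Fin qb) ℝ)
    (Xb12 : Fin Nb → Matrix (Fin qb) (Fin mb) ℝ)
    (Xb21 : Fin Nb → Matrix (Fin mb) (Fin qb) ℝ)
    (Xb22 : Fin Nb → Matrix (Fin mb) (Fin mb) ℝ)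
    (p : Fin N → ℝ) (pb : Fin Nb → ℝ)
    (hp : ∀ i, 0 < p i) (hpb : ∀ i, 0 < pb i)
    (Muy : Matrix (Fin q × Fin N) (Fin m × Fin N) ℝ)
    (Muyb : Matrix (Fin q × Fin N) (Fin mb × Fin Nb) ℝ)
    (Mbuy : Matrix (Fin qb × Fin Nb) (Fin m × Fin N) ℝ)
    (Mbuyb : Matrix (Fin qb × Fin Nb) (Fin mb × Fin Nb) ℝ)
    (u : Fin q × Fin N → ℝ) (y : Fin m × Fin N → ℝ)
    (ub : Fin qb × Fin Nb → ℝ) (yb : Fin mb × Fin Nb → ℝ)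
    (Vdot : Fin N → ℝ) (Vbdot : Fin Nb → ℝ)
    -- subsystem dissipation inequalities
    (hdiss : ∀ i : Fin N,
      Vdot i ≤
        (Sum.elim (fun a => u (a, i)) (fun b => y (b, i))) ⬝ᵥ
          ((Matrix.fromBlocks (X11 i) (X12 i) (X21 i) (X22 i)).mulVec
            (Sum.elim (fun a => u (a, i)) (fun b => y (b, i)))))
    (hdissb : ∀ i : Fin Nb,
      Vbdot i ≤
        (Sum.elim (fun a => ub (a, i)) (fun b => yb (b, i))) ⬝ᵥ
          ((Matrix.fromBlocks (Xb11 i) (Xb12 i) (Xb21 i) (Xb22 i)).mulVec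
            (Sum.elim (fun a => ub (a, i)) (fun b => yb (b, i)))))
    -- interconnection [u;ū] = M [y;ȳ]
    (hint : u = Muy.mulVec y + Muyb.mulVec yb)
    (hintb : ub = Mbuy.mulVec y + Mbuyb.mulVec yb)
    -- the LMI: Sᵀ · blkdiag(𝐗_p, 𝐗̄_{p̄}) · S ≤ 0, where S stacks
    -- [[M_{uy},M_{uȳ}],[I,0],[M_{ūy},M_{ūȳ}],[0,I]]
    (hLMI :
      let S : Matrix
          (((Fin q × Fin N) ⊕ (Fin m × Fin N)) ⊕
            ((Fin qb × Fin Nb) ⊕ (Fin mb × Fin Nb)))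
          ((Fin m × Fin N) ⊕ (Fin mb × Fin Nb)) ℝ :=
        Matrix.fromBlocks
          (Matrix.of fun r c =>
            Sum.elim (fun a => Muy a c) (fun b => if b = c then (1:ℝ) else 0) r)
          (Matrix.of fun r c =>
            Sum.elim (fun a => Muyb a c) (fun _ => (0:ℝ)) r)
          (Matrix.of fun r c =>
            Sum.elim (fun a => Mbuy a c) (fun _ => (0:ℝ)) r)
          (Matrix.of fun r c =>
            Sum.elim (fun a => Mbuyb a c) (fun b => if b = c then (1:ℝ) else 0) r)
      let Xp :=
        Matrix.fromBlocks
          (Matrix.blockDiagonal fun i => p i • X11 i)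
          (Matrix.blockDiagonal fun i => p i • X12 i)
          (Matrix.blockDiagonal fun i => p i • X21 i)
          (Matrix.blockDiagonal fun i => p i • X22 i)
      let Xbp :=
        Matrix.fromBlocks
          (Matrix.blockDiagonal fun i => pb i • Xb11 i)
          (Matrix.blockDiagonal fun i => pb i • Xb12 i)
          (Matrix.blockDiagonal fun i => pb i • Xb21 i)
          (Matrix.blockDiagonal fun i => pb i • Xb22 i)
      ∀ z : (Fin m × Fin N) ⊕ (Fin mb × Fin Nb) → ℝ,
        z ⬝ᵥ ((Sᵀ * Matrix.fromBlocks Xp 0 0 Xbp * S).mulVec z) ≤ 0) :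
    (∑ i, p i * Vdot i) + (∑ i, pb i * Vbdot i) ≤ 0 := by

  classical
  set S : Matrix
      (((Fin q × Fin N) ⊕ (Fin m × Fin N)) ⊕
        ((Fin qb × Fin Nb) ⊕ (Fin mb × Fin Nb)))
      ((Fin m × Fin N) ⊕ (Fin mb × Fin Nb)) ℝ :=
    Matrix.fromBlocks
      (Matrix.of fun r c =>
        Sum.elim (fun a => Muy a c) (fun b => if b = c then (1:ℝ) else 0) r)
      (Matrix.of fun r c =>
        Sum.elim (fun a => Muyb a c) (fun _ => (0:ℝ)) r)
      (Matrix.of fun r c =>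
        Sum.elim (fun a => Mbuy a c) (fun _ => (0:ℝ)) r)
      (Matrix.of fun r c =>
        Sum.elim (fun a => Mbuyb a c) (fun b => if b = c then (1:ℝ) else 0) r)
    with hSdef
  set Xp := Matrix.fromBlocks
      (Matrix.blockDiagonal fun i => p i • X11 i)
      (Matrix.blockDiagonal fun i => p i • X12 i)
      (Matrix.blockDiagonal fun i => p i • X21 i)
      (Matrix.blockDiagonal fun i => p i • X22 i) with hXp
  set Xbp := Matrix.fromBlocks
      (Matrix.blockDiagonal fun i => pb i • Xb11 i)
      (Matrix.blockDiagonal fun i => pb i • Xb12 i)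
      (Matrix.blockDiagonal fun i => pb i • Xb21 i)
      (Matrix.blockDiagonal fun i => pb i • Xb22 i) with hXbp
  have hz := hLMI (Sum.elim y yb)
  have hS : S.mulVec (Sum.elim y yb) = Sum.elim (Sum.elim u y) (Sum.elim ub yb) := by
    funext x
    rcases x with (x | x) | (x | x) <;>
      simp [hSdef, hint, hintb, mulVec, dotProduct, Fintype.sum_sum_type,
        Finset.sum_ite_eq, Finset.sum_ite_eq']
  have key : (Sum.elim (Sum.elim u y) (Sum.elim ub yb)) ⬝ᵥ
      ((Matrix.fromBlocks Xp 0 0 Xbp).mulVec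
        (Sum.elim (Sum.elim u y) (Sum.elim ub yb))) ≤ 0 := by
    have := hz
    rw [← Matrix.mulVec_mulVec, ← Matrix.mulVec_mulVec,
      Matrix.dotProduct_mulVec, Matrix.vecMul_transpose, hS] at this
    exact this
  have hsplit : (Sum.elim (Sum.elim u y) (Sum.elim ub yb)) ⬝ᵥ
      ((Matrix.fromBlocks Xp 0 0 Xbp).mulVec
        (Sum.elim (Sum.elim u y) (Sum.elim ub yb)))
      = (Sum.elim u y) ⬝ᵥ (Xp.mulVec (Sum.elim u y))
        + (Sum.elim ub yb) ⬝ᵥ (Xbp.mulVec (Sum.elim ub yb)) := by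
    rw [Matrix.fromBlocks_mulVec]
    simp [sumElim_dotProduct_sumElim]
  have h1 : (∑ i, p i * Vdot i) ≤ (Sum.elim u y) ⬝ᵥ (Xp.mulVec (Sum.elim u y)) := by
    rw [hXp, blockdiag_quad]
    exact Finset.sum_le_sum fun i _ =>
      mul_le_mul_of_nonneg_left (hdiss i) (hp i).le
  have h2 : (∑ i, pb i * Vbdot i) ≤ (Sum.elim ub yb) ⬝ᵥ (Xbp.mulVec (Sum.elim ub yb)) := by
    rw [hXbp, blockdiag_quad]
    exact Finset.sum_le_sum fun i _ =>
      mul_le_mul_of_nonneg_left (hdissb i) (hpb i).le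
  calc (∑ i, p i * Vdot i) + (∑ i, pb i * Vbdot i)
      ≤ (Sum.elim u y) ⬝ᵥ (Xp.mulVec (Sum.elim u y))
        + (Sum.elim ub yb) ⬝ᵥ (Xbp.mulVec (Sum.elim ub yb)) := add_le_add h1 h2
    _ = _ := hsplit.symm
    _ ≤ 0 := key
end
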